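/- arXiv:2511.20369 — 3 statements merged into one kernel-verified Lean document; each statement's English description precedes it below -/
import Mathlib

section
/- For every territory τ, formula φ ∈ A and set rb of regions, the set saturate(φ, rb, τ) of saturated successors is nonempty. Moreover, for all territories τ, τ' and transitions t with τ ▷t τ' and rb = bystanders(t,τ), it holds that τ ▷t τ'' for every τ'' ∈ saturate(φ, rb, τ'). -/
/-!
Common semantic framework for "The Ghosts of Empires":
Petri programs, Hoare triples, invariant domains, Owicki-Gries annotations,
territories, empires, saturated empires, focus.
-/

namespace GhostsOfEmpires

/-- Reachable states of a (partial) state machine with transition alphabet `T`. -/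
inductive EmpReach {Q T : Type*} (q0 : Q) (δ : Q → T → Option Q) : Q → Prop
  | init : EmpReach q0 δ q0
  | step {q : Q} {t : T} {q' : Q} : EmpReach q0 δ q → δ q t = some q' → EmpReach q0 δ q'

/-- Restriction of a partial transition function to the reachable part. -/
def restrictδ {Q T : Type*} (q0 : Q) (δ : Q → T → Option Q)
    (q : {q : Q // EmpReach q0 δ q}) (t : T) : Option {q : Q // EmpReach q0 δ q} :=
  match h : δ q.val t with
  | none => none
  | some q' => some ⟨q', EmpReach.step q.property h⟩

/-- A Petri program: places, transitions, flow relation (given by `pre`/`post`),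
initial marking, statement labels, error places, and a semantics for statements
(formulas over the program variables are modelled semantically as predicates on `State`,
the type of valuations of the program variables). Since the program is assumed one-safe,
markings are identified with sets of places. -/
structure PetriNet (Place Trans Stmt State : Type*) where
  pre : Trans → Set Place
  post : Trans → Set Place
  mInit : Set Place
  label : Trans → Stmt
  err : Set Place
  sem : Stmt → State → State → Prop

/-- Owicki-Gries annotation: ghost state type `GS` (the product of the domains of the
ghost variables), invariant mapping `ω` (formulas over program and ghost variables),
ghost update mapping `γ` (executed after the statement of the transition), and
initial ghost valuation `ρ`. -/
structure OG (Place Trans State GS : Type*) where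
  ω : Place → State → GS → Prop
  γ : Trans → State → GS → GS
  ρ : GS

/-- The data of an empire: a state machine with laws and territories. -/
structure EmpireData (Place Trans State Q : Type*) where
  qInit : Q
  δ : Q → Trans → Option Q
  law : Q → State → Prop
  terr : Q → Set (Set Place)

/-- `Q_p`: the set of empire states whose territory contains `p` in some region. -/
def Qp {Place Trans State Q : Type*} (E : EmpireData Place Trans State Q) (p : Place) :
    Set Q :=
  {q | ∃ r ∈ E.terr q, p ∈ r}

/-- The imperial Owicki-Gries annotation of an empire: one ghost variable `g` ranging
over the states `Q`, initialized to `qInit`, updated according to `δ`, and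
`ω(p) = ⋁_{q ∈ Q_p} (g = q ∧ law q)`. -/
def imperialOG {Place Trans State Q : Type*} (E : EmpireData Place Trans State Q) :
    OG Place Trans State Q where
  ω := fun p s g => ∃ q ∈ Qp E p, g = q ∧ E.law q s
  γ := fun t _ g => (E.δ g t).getD g
  ρ := E.qInit

/-- Restriction of an empire given by raw data to its reachable part. -/
def restrictEmpire {Place Trans State Q : Type*} (q0 : Q) (δ0 : Q → Trans → Option Q)
    (law : Q → State → Prop) (terr : Q → Set (Set Place)) :
    EmpireData Place Trans State {q : Q // EmpReach q0 δ0 q} where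
  qInit := ⟨q0, EmpReach.init⟩
  δ := restrictδ q0 δ0
  law := fun q => law q.val
  terr := fun q => terr q.val

/-- `m ∈ ⟦τ⟧`: `m` is derived by taking exactly one place from each region of `τ`. -/
def InTreaty {Place : Type*} (τ : Set (Set Place)) (m : Set Place) : Prop :=
  ∃ f : Set Place → Place, (∀ r ∈ τ, f r ∈ r) ∧ m = {p | ∃ r ∈ τ, p = f r}

namespace PetriNet

variable {Place Trans Stmt State : Type*} (N : PetriNet Place Trans Stmt State)

/-- `m ▷t m'`: transition `t` is enabled in `m` and firing it yields `m'`. -/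
def fires (m : Set Place) (t : Trans) (m' : Set Place) : Prop :=
  N.pre t ⊆ m ∧ m' = (m \ N.pre t) ∪ N.post t

/-- Firing sequences. -/
inductive FiringSeq : Set Place → List Trans → Set Place → Prop
  | nil (m : Set Place) : FiringSeq m [] m
  | cons {m m' m'' : Set Place} {t : Trans} {ts : List Trans} :
      N.fires m t m' → FiringSeq m' ts m'' → FiringSeq m (t :: ts) m''

/-- A marking is reachable if some firing sequence from the initial marking ends in it. -/
def Reachable (m : Set Place) : Prop := ∃ ts, N.FiringSeq N.mInit ts m

/-- The Hoare triple `{φ} st {ψ}` holds. -/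
def Hoare (φ : State → Prop) (st : Stmt) (ψ : State → Prop) : Prop :=
  ∀ s s', φ s → N.sem st s s' → ψ s'

/-- Semantics of a sequence of statements. -/
inductive SeqSem : List Stmt → State → State → Prop
  | nil (s : State) : SeqSem [] s s
  | cons {st : Stmt} {sts : List Stmt} {s s' s'' : State} :
      N.sem st s s' → SeqSem sts s' s'' → SeqSem (st :: sts) s s''

/-- The Petri program is correct: for every firing sequence reaching a marking that
contains an error place, the Hoare triple `{⊤} λ(t1)...λ(tn) {⊥}` holds. -/
def Correct : Prop :=
  ∀ ts m, N.FiringSeq N.mInit ts m → (m ∩ N.err).Nonempty →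
    ∀ s s', N.SeqSem (List.map N.label ts) s s' → False

/-- `p` and `t` are co-marked. -/
def coMarked (p : Place) (t : Trans) : Prop :=
  p ∉ N.pre t ∧ ∃ m, N.Reachable m ∧ p ∈ m ∧ N.pre t ⊆ m

/-- Two places are co-related. -/
def coRelated (p p' : Place) : Prop :=
  p ≠ p' ∧ ∃ m, N.Reachable m ∧ p ∈ m ∧ p' ∈ m

/-- A region: a nonempty set of places that are pairwise not co-related. -/
def IsRegion (r : Set Place) : Prop :=
  r.Nonempty ∧ ∀ p1 ∈ r, ∀ p2 ∈ r, ¬ N.coRelated p1 p2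

/-- A territory: a set of pairwise disjoint regions all of whose treaty members are
reachable markings. -/
def IsTerritory (τ : Set (Set Place)) : Prop :=
  (∀ r ∈ τ, N.IsRegion r) ∧
  (∀ r1 ∈ τ, ∀ r2 ∈ τ, r1 ≠ r2 → r1 ∩ r2 = ∅) ∧
  (∀ m, InTreaty τ m → N.Reachable m)

/-- `t` is enabled in the territory `τ`: every predecessor place lies in a distinct
region of `τ`. -/
def terrEnabled (t : Trans) (τ : Set (Set Place)) : Prop :=
  ∃ f : Place → Set Place, (∀ p ∈ N.pre t, f p ∈ τ ∧ p ∈ f p) ∧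
    ∀ p1 ∈ N.pre t, ∀ p2 ∈ N.pre t, p1 ≠ p2 → f p1 ≠ f p2

/-- `τ ▷t τ'`: the firing relation on territories. -/
def terrFires (τ : Set (Set Place)) (t : Trans) (τ' : Set (Set Place)) : Prop :=
  ∃ f f' : Place → Set Place,
    (∀ p ∈ N.pre t, f p ∈ τ ∧ p ∈ f p) ∧
    (∀ p1 ∈ N.pre t, ∀ p2 ∈ N.pre t, p1 ≠ p2 → f p1 ≠ f p2) ∧
    (∀ p ∈ N.post t, N.IsRegion (f' p) ∧ p ∈ f' p) ∧
    (∀ p1 ∈ N.post t, ∀ p2 ∈ N.post t, p1 ≠ p2 → f' p1 ≠ f' p2) ∧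
    τ' = (τ \ {r | ∃ p ∈ N.pre t, r = f p}) ∪ {r | ∃ p ∈ N.post t, r = f' p}

/-- The bystander regions of `t` in `τ`. -/
def bystanders (t : Trans) (τ : Set (Set Place)) : Set (Set Place) :=
  {r ∈ τ | r ∩ N.pre t = ∅}

/-- The replaced territory `replace(t,τ)`. -/
def replaceT (t : Trans) (τ : Set (Set Place)) : Set (Set Place) :=
  N.bystanders t τ ∪ {r | ∃ p ∈ N.post t, r = {p}}

/-- `τ` is extendable with `t`. -/
def extendable (t : Trans) (τ : Set (Set Place)) : Prop :=
  N.terrEnabled t τ ∧ (∃ p, N.pre t = {p}) ∧ (∃ p', N.post t = {p'}) ∧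
    ∀ r ∈ τ, (r ∩ N.pre t).Nonempty → ∀ p'' ∈ r, ∀ p' ∈ N.post t, ¬ N.coRelated p' p''

/-- The extended territory `extend(t,τ)`: the (unique) region meeting `•t` is enlarged
by the successor place. -/
def extendT (t : Trans) (τ : Set (Set Place)) : Set (Set Place) :=
  N.bystanders t τ ∪ {r' | ∃ r ∈ τ, (r ∩ N.pre t).Nonempty ∧ r' = r ∪ N.post t}

/-- An invariant domain for `N`: a finite set `A` of formulas (modelled semantically)
containing `⊥` and `⊤`, and a post operator such that `{φ} λ(t) {post(φ,t)}` always holds. -/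
structure InvDomain where
  A : Set (State → Prop)
  postF : (State → Prop) → Trans → (State → Prop)
  finA : A.Finite
  bot_mem : (fun _ => False) ∈ A
  top_mem : (fun _ => True) ∈ A
  post_mem : ∀ φ ∈ A, ∀ t, postF φ t ∈ A
  post_hoare : ∀ φ ∈ A, ∀ t, N.Hoare φ (N.label t) (postF φ t)

/-- Reachable abstract configurations, generically over a type `Φ` of laws with a post
operator `postA` and top element `φtop`. -/
inductive AbsReachG {Φ : Type*} (postA : Φ → Trans → Φ) (φtop : Φ) : Set Place → Φ → Prop
  | init : AbsReachG postA φtop N.mInit φtop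
  | step {m : Set Place} {φ : Φ} {t : Trans} {m' : Set Place} :
      AbsReachG postA φtop m φ → N.fires m t m' → AbsReachG postA φtop m' (postA φ t)

/-- The invariant domain is safe: every reachable abstract configuration at a marking
containing an error place has law equivalent to `⊥`. -/
def SafeDomain (D : InvDomain N) : Prop :=
  ∀ m φ, N.AbsReachG D.postF (fun _ => True) m φ → (m ∩ N.err).Nonempty → ∀ s, ¬ φ s

/-- Validity of an Owicki-Gries annotation: initial, inductive, interference-free, safe. -/
structure OGValid {GS : Type*} (og : OG Place Trans State GS) : Prop where
  initialCond : ∀ p ∈ N.mInit, ∀ s, og.ω p s og.ρ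
  inductiveCond : ∀ t s g s', (∀ p ∈ N.pre t, og.ω p s g) →
    N.sem (N.label t) s s' → ∀ p ∈ N.post t, og.ω p s' (og.γ t s' g)
  interferenceFree : ∀ t p, N.coMarked p t → ∀ s g s',
    og.ω p s g → (∀ p' ∈ N.pre t, og.ω p' s g) →
    N.sem (N.label t) s s' → og.ω p s' (og.γ t s' g)
  safeCond : ∀ p ∈ N.err, ∀ s g, ¬ og.ω p s g

/-- The naive Owicki-Gries annotation `OG_naive(A,post)`: the ghost state is the set of
places `p` whose boolean ghost variable `g_p` is true; `ω(p)` is the disjunction over all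
reachable markings `m` containing `p` of `χ(m) ∧ β(m)`. -/
def naiveOG (D : InvDomain N) : OG Place Trans State (Set Place) where
  ω := fun p s g => ∃ m, N.Reachable m ∧ p ∈ m ∧ g = m ∧
    ∃ φ, N.AbsReachG D.postF (fun _ => True) m φ ∧ φ s
  γ := fun t _ g => (g \ (N.pre t \ N.post t)) ∪ (N.post t \ N.pre t)
  ρ := N.mInit

/-- Validity of an empire. -/
structure ValidEmpire {Q : Type*} (E : EmpireData Place Trans State Q) : Prop where
  terrOK : ∀ q, N.IsTerritory (E.terr q)
  initialLaw : ∀ s, E.law E.qInit s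
  initialTerr : InTreaty (E.terr E.qInit) N.mInit
  inductiveLaw : ∀ q t, N.terrEnabled t (E.terr q) →
    (∃ q', E.δ q t = some q' ∧ N.Hoare (E.law q) (N.label t) (E.law q')) ∨
      N.Hoare (E.law q) (N.label t) (fun _ => False)
  inductiveTerr : ∀ q t q', E.δ q t = some q' → N.terrFires (E.terr q) t (E.terr q')
  safeCond : ∀ q, (∃ r ∈ E.terr q, (r ∩ N.err).Nonempty) → ∀ s, ¬ E.law q s

/-- The initial territory `τ_init = {{p} | p ∈ m_init}`. -/
def tauInit : Set (Set Place) := {r | ∃ p ∈ N.mInit, r = {p}}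

/-- `SaturateG postA φ rb τ τ'` means `τ' ∈ saturate(φ, rb, τ)` (saturated successors). -/
inductive SaturateG {Φ : Type*} (postA : Φ → Trans → Φ) (φ : Φ) (rb : Set (Set Place)) :
    Set (Set Place) → Set (Set Place) → Prop
  | base {τ : Set (Set Place)} :
      (¬ ∃ t, N.extendable t τ ∧ ¬ N.terrFires τ t τ ∧ postA φ t = φ ∧
        rb ⊆ N.bystanders t τ) →
      SaturateG postA φ rb τ τ
  | step {τ : Set (Set Place)} {t : Trans} {τ' : Set (Set Place)} :
      N.extendable t τ → ¬ N.terrFires τ t τ → postA φ t = φ →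
      rb ⊆ N.bystanders t τ → SaturateG postA φ rb (N.extendT t τ) τ' →
      SaturateG postA φ rb τ τ'

/-- `(q0, δ0)` is the data of a saturated empire (before restriction to the reachable
part), generically over a type `Φ` of laws with post operator `postA`, interpretation
`interp` and top element `φtop`. -/
structure IsSaturatedG {Φ : Type*} (postA : Φ → Trans → Φ) (interp : Φ → State → Prop)
    (φtop : Φ) (q0 : Set (Set Place) × Φ)
    (δ0 : Set (Set Place) × Φ → Trans → Option (Set (Set Place) × Φ)) : Prop where
  initCond : ∃ τ, N.SaturateG postA φtop ∅ N.tauInit τ ∧ q0 = (τ, φtop)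
  undefCond : ∀ τ φ t, (¬ N.terrEnabled t τ ∨ ∀ s, ¬ interp (postA φ t) s) →
    δ0 (τ, φ) t = none
  selfCond : ∀ τ φ t, N.terrEnabled t τ → (∃ s, interp (postA φ t) s) →
    N.terrFires τ t τ → postA φ t = φ → δ0 (τ, φ) t = some (τ, φ)
  stepCond : ∀ τ φ t, N.terrEnabled t τ → (∃ s, interp (postA φ t) s) →
    ¬ (N.terrFires τ t τ ∧ postA φ t = φ) →
    ∃ τ', N.SaturateG postA (postA φ t) (N.bystanders t τ) (N.replaceT t τ) τ' ∧
      δ0 (τ, φ) t = some (τ', postA φ t)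

open Classical in
/-- The transition function of the naive empire. -/
noncomputable def naiveδ (D : InvDomain N) (q : Set (Set Place) × (State → Prop))
    (t : Trans) : Option (Set (Set Place) × (State → Prop)) :=
  if N.terrEnabled t q.1 ∧ ∃ s, D.postF q.2 t s then some (N.replaceT t q.1, D.postF q.2 t)
  else none

/-- The naive empire `E_naive(A,post)`: the reachable part of the empire whose states are
pairs of territories and laws, with initial state `⟨τ_init, ⊤⟩`. -/
noncomputable def naiveEmpire (D : InvDomain N) :
    EmpireData Place Trans State
      {q : Set (Set Place) × (State → Prop) //
        EmpReach (N.tauInit, fun _ => True) (N.naiveδ D) q} :=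
  restrictEmpire (N.tauInit, fun _ => True) (N.naiveδ D) Prod.snd Prod.fst

open Classical in
/-- The product post operator of a family of invariant domains, acting on vectors of
component formulas (the vector `φv` represents the conjunction `⋀_i φv i`). -/
noncomputable def prodPost {n : ℕ} (Ds : Fin n → InvDomain N)
    (φv : Fin n → State → Prop) (t : Trans) : Fin n → State → Prop :=
  if ∀ i, ∃ s, (Ds i).postF (φv i) t s then fun i => (Ds i).postF (φv i) t
  else fun _ _ => False

/-- Safety of the product invariant domain. -/
def prodSafe {n : ℕ} (Ds : Fin n → InvDomain N) : Prop :=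
  ∀ m φv, N.AbsReachG (N.prodPost Ds) (fun _ _ => True) m φv →
    (m ∩ N.err).Nonempty → ∀ s, ¬ ∀ i, φv i s

/-- A focus on a saturated empire (given by raw data `(q0, δ0)` over vector laws). -/
structure IsFocus {n : ℕ} (Ds : Fin n → InvDomain N)
    (q0 : Set (Set Place) × (Fin n → State → Prop))
    (δ0 : Set (Set Place) × (Fin n → State → Prop) → Trans →
      Option (Set (Set Place) × (Fin n → State → Prop)))
    (ℓ : Set (Set Place) × (Fin n → State → Prop) → Set Place → Set (Fin n)) :
    Prop where
  safeCond : ∀ q, EmpReach q0 δ0 q → ∀ t, N.terrEnabled t q.1 → δ0 q t = none →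
    ∃ r ∈ q.1, ∃ i, (r ∩ N.pre t).Nonempty ∧ (∀ s, ¬ (Ds i).postF (q.2 i) t s) ∧ i ∈ ℓ q r
  inductiveEdge : ∀ q q' t, EmpReach q0 δ0 q → δ0 q t = some q' →
    ∀ r' ∈ q'.1, (r' ∩ N.post t).Nonempty → ∀ i ∈ ℓ q' r',
      ∃ r ∈ q.1, (r ∩ N.pre t).Nonempty ∧ i ∈ ℓ q r
  bystandersCond : ∀ q q' t, EmpReach q0 δ0 q → δ0 q t = some q' →
    ∀ r ∈ N.bystanders t q.1, ∀ i ∈ ℓ q' r, i ∈ ℓ q r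

end PetriNet

/-- A saturated empire (over scalar laws): the reachable part of the data `(q0, δ0)`. -/
def saturatedEmpire {Place Trans State : Type*}
    (q0 : Set (Set Place) × (State → Prop))
    (δ0 : Set (Set Place) × (State → Prop) → Trans →
      Option (Set (Set Place) × (State → Prop))) :
    EmpireData Place Trans State {q // EmpReach q0 δ0 q} :=
  restrictEmpire q0 δ0 Prod.snd Prod.fst

/-- The focused law `law_p(q) = ⋀ {φ_i | ∃ r ∈ terr(q). i ∈ ℓ(q,r) ∧ p ∈ r}`. -/
def lawP {Place State : Type*} {n : ℕ}
    (ℓ : Set (Set Place) × (Fin n → State → Prop) → Set Place → Set (Fin n))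
    (q : Set (Set Place) × (Fin n → State → Prop)) (p : Place) : State → Prop :=
  fun s => ∀ i, (∃ r ∈ q.1, i ∈ ℓ q r ∧ p ∈ r) → q.2 i s

/-- `law_X(q) = ⋀_{p ∈ X} law_p(q)`. -/
def lawX {Place State : Type*} {n : ℕ}
    (ℓ : Set (Set Place) × (Fin n → State → Prop) → Set Place → Set (Fin n))
    (q : Set (Set Place) × (Fin n → State → Prop)) (X : Set Place) : State → Prop :=
  fun s => ∀ p ∈ X, lawP ℓ q p s

/-- The focused imperial Owicki-Gries annotation `OG_{E,ℓ}` of the saturated empire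
given by `(q0, δ0)` (restricted to its reachable part) with focus `ℓ`:
`ω(p) = ⋁_{q ∈ Q_p} (g = q ∧ law_p(q))`. -/
def focusedOG {Place Trans State : Type*} {n : ℕ}
    (q0 : Set (Set Place) × (Fin n → State → Prop))
    (δ0 : Set (Set Place) × (Fin n → State → Prop) → Trans →
      Option (Set (Set Place) × (Fin n → State → Prop)))
    (ℓ : Set (Set Place) × (Fin n → State → Prop) → Set Place → Set (Fin n)) :
    OG Place Trans State {q // EmpReach q0 δ0 q} where
  ω := fun p s g => ∃ q : {q // EmpReach q0 δ0 q},
    (∃ r ∈ q.val.1, p ∈ r) ∧ g = q ∧ lawP ℓ q.val p s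
  γ := fun t _ g => (restrictδ q0 δ0 g t).getD g
  ρ := ⟨q0, EmpReach.init⟩

end GhostsOfEmpires

namespace GhostsOfEmpires
namespace PetriNet

variable {Place Trans Stmt State : Type*} (N : PetriNet Place Trans Stmt State)

lemma coRelated_symm {p p' : Place} (h : N.coRelated p p') : N.coRelated p' p := by
  obtain ⟨hne, m, hm, h1, h2⟩ := h
  exact ⟨hne.symm, m, hm, h2, h1⟩

lemma firingSeq_snoc {m m' m'' : Set Place} {ts : List Trans} {t : Trans}
    (h : N.FiringSeq m ts m') (hf : N.fires m' t m'') :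
    N.FiringSeq m (ts ++ [t]) m'' := by
  induction h with
  | nil m => exact FiringSeq.cons hf (FiringSeq.nil _)
  | cons h1 _ ih => exact FiringSeq.cons h1 (ih hf)

lemma reachable_step {m m' : Set Place} {t : Trans}
    (h : N.Reachable m) (hf : N.fires m t m') : N.Reachable m' := by
  obtain ⟨ts, hts⟩ := h
  exact ⟨ts ++ [t], N.firingSeq_snoc hts hf⟩

lemma extend_key {τ : Set (Set Place)} {t : Trans}
    (hτ : N.IsTerritory τ) (hext : N.extendable t τ) (hnf : ¬ N.terrFires τ t τ) :
    ∃ (r0 : Set Place) (p p' : Place),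
      N.pre t = {p} ∧ N.post t = {p'} ∧ r0 ∈ τ ∧ p ∈ r0 ∧
      (∀ r ∈ τ, p' ∉ r) ∧
      N.extendT t τ = (τ \ {r0}) ∪ {r0 ∪ {p'}} ∧
      N.IsRegion (r0 ∪ {p'}) ∧
      N.IsTerritory (N.extendT t τ) ∧
      ⋃₀ (N.extendT t τ) = insert p' (⋃₀ τ) := by
  obtain ⟨⟨f, hf1, hf2⟩, ⟨p, hp⟩, ⟨p', hp'⟩, hnc⟩ := hext
  obtain ⟨hreg, hdisj, htreaty⟩ := hτ
  set r0 := f p with hr0def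
  have hpmem : p ∈ N.pre t := by rw [hp]; rfl
  have hp'mem : p' ∈ N.post t := by rw [hp']; rfl
  obtain ⟨hr0τ, hpr0⟩ := hf1 p hpmem
  -- uniqueness of the region containing p
  have huniq : ∀ r ∈ τ, p ∈ r → r = r0 := by
    intro r hr hpr
    by_contra hne
    have := hdisj r hr r0 hr0τ hne
    exact absurd (Set.mem_inter hpr hpr0) (by rw [this]; exact not_false_iff.mpr trivial)
  -- p' is not in any region of τ
  have hp'notin : ∀ r ∈ τ, p' ∉ r := by
    intro r hr hp'r
    by_cases hrr0 : r = r0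
    · -- then terrFires τ t τ, contradiction
      have hpr : p ∈ r := by rw [hrr0]; exact hpr0
      apply hnf
      refine ⟨fun _ => r, fun _ => r, ?_, ?_, ?_, ?_, ?_⟩
      · intro q hq; rw [hp] at hq; cases hq; exact ⟨hr, hpr⟩
      · intro q1 hq1 q2 hq2 hne; rw [hp] at hq1 hq2; cases hq1; cases hq2; exact absurd rfl hne
      · intro q hq; rw [hp'] at hq; cases hq; exact ⟨hreg r hr, hp'r⟩
      · intro q1 hq1 q2 hq2 hne; rw [hp'] at hq1 hq2; cases hq1; cases hq2; exact absurd rfl hne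
      · have h1 : {r' | ∃ q ∈ N.pre t, r' = (fun _ => r) q} = {r} := by
          ext x; simp [hp]
        have h2 : {r' | ∃ q ∈ N.post t, r' = (fun _ => r) q} = {r} := by
          ext x; simp [hp']
        rw [h1, h2, Set.diff_union_self, Set.union_eq_self_of_subset_right]
        exact Set.singleton_subset_iff.mpr hr
    · -- p and p' are co-related via a treaty marking, contradicting extendability
      have hpnr : p ∉ r := fun hpr => hrr0 (huniq r hr hpr)
      classical
      set g : Set Place → Place := fun r' =>
        if r' = r0 then p else if r' = r then p' else
          if h : r'.Nonempty then h.choose else p with hg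
      have hgmem : ∀ r' ∈ τ, g r' ∈ r' := by
        intro r' hr'
        by_cases h1 : r' = r0
        · simp [hg, h1]; exact hpr0
        · by_cases h2 : r' = r
          · simp only [hg]; rw [if_neg h1, if_pos h2, h2]; exact hp'r
          · have hne : r'.Nonempty := (hreg r' hr').1
            simp only [hg]; rw [if_neg h1, if_neg h2, dif_pos hne]
            exact hne.choose_spec
      set m : Set Place := {x | ∃ r' ∈ τ, x = g r'} with hm
      have hmreach : N.Reachable m := htreaty m ⟨g, hgmem, rfl⟩
      have hpm : p ∈ m := ⟨r0, hr0τ, by simp [hg]⟩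
      have hp'm : p' ∈ m := ⟨r, hr, by simp [hg, hrr0]⟩
      have hpnep' : p ≠ p' := fun h => hpnr (h ▸ hp'r)
      exact hnc r0 hr0τ ⟨p, hpr0, hpmem⟩ p hpr0 p' hp'mem ⟨hpnep'.symm, m, hmreach, hp'm, hpm⟩
  have hp'r0 : p' ∉ r0 := hp'notin r0 hr0τ
  -- the shape of extendT
  have hbys : N.bystanders t τ = τ \ {r0} := by
    ext r
    constructor
    · rintro ⟨hr, hint⟩
      refine ⟨hr, fun h => ?_⟩
      rw [Set.mem_singleton_iff] at h
      subst h
      exact absurd (Set.mem_inter hpr0 hpmem) (by rw [hint]; exact not_false_iff.mpr trivial)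
    · rintro ⟨hr, hne⟩
      refine ⟨hr, ?_⟩
      ext x
      simp only [Set.mem_inter_iff, Set.mem_empty_iff_false, iff_false, not_and]
      intro hxr hxpre
      rw [hp, Set.mem_singleton_iff] at hxpre
      subst hxpre
      exact hne (Set.mem_singleton_iff.mpr (huniq r hr hxr))
  have hsecond : {r' | ∃ r ∈ τ, (r ∩ N.pre t).Nonempty ∧ r' = r ∪ N.post t} = {r0 ∪ {p'}} := by
    ext r'
    simp only [Set.mem_setOf_eq, Set.mem_singleton_iff]
    constructor
    · rintro ⟨r, hr, ⟨x, hxr, hxpre⟩, rfl⟩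
      rw [hp, Set.mem_singleton_iff] at hxpre
      subst hxpre
      rw [huniq r hr hxr, hp']
    · rintro rfl
      exact ⟨r0, hr0τ, ⟨p, hpr0, hpmem⟩, by rw [hp']⟩
  have hshape : N.extendT t τ = (τ \ {r0}) ∪ {r0 ∪ {p'}} := by
    rw [extendT, hbys, hsecond]
  -- the extended region is a region
  have hnewreg : N.IsRegion (r0 ∪ {p'}) := by
    refine ⟨⟨p, Or.inl hpr0⟩, ?_⟩
    rintro p1 (hp1 | hp1) p2 (hp2 | hp2) hcr
    · exact (hreg r0 hr0τ).2 p1 hp1 p2 hp2 hcr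
    · rw [Set.mem_singleton_iff] at hp2; subst hp2
      exact hnc r0 hr0τ ⟨p, hpr0, hpmem⟩ p1 hp1 p2 hp'mem (N.coRelated_symm hcr)
    · rw [Set.mem_singleton_iff] at hp1; subst hp1
      exact hnc r0 hr0τ ⟨p, hpr0, hpmem⟩ p2 hp2 p1 hp'mem hcr
    · rw [Set.mem_singleton_iff] at hp1 hp2; subst hp1; subst hp2
      exact hcr.1 rfl
  have hnewne : r0 ∪ {p'} ∉ τ := fun h => hp'notin _ h (Or.inr rfl)
  -- territory
  have hterr : N.IsTerritory (N.extendT t τ) := by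
    rw [hshape]
    refine ⟨?_, ?_, ?_⟩
    · rintro r (⟨hr, _⟩ | hr)
      · exact hreg r hr
      · rw [Set.mem_singleton_iff] at hr; subst hr; exact hnewreg
    · rintro r1 (⟨hr1, hr1ne⟩ | hr1) r2 (⟨hr2, hr2ne⟩ | hr2) hne
      · exact hdisj r1 hr1 r2 hr2 hne
      · rw [Set.mem_singleton_iff] at hr2; subst hr2
        rw [Set.mem_singleton_iff] at hr1ne
        ext x
        simp only [Set.mem_inter_iff, Set.mem_union, Set.mem_singleton_iff,
          Set.mem_empty_iff_false, iff_false, not_and]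
        rintro hx1 (hx2 | rfl)
        · exact absurd (Set.mem_inter hx1 hx2)
            (by rw [hdisj r1 hr1 r0 hr0τ hr1ne]; exact not_false_iff.mpr trivial)
        · exact hp'notin r1 hr1 hx1
      · rw [Set.mem_singleton_iff] at hr1; subst hr1
        rw [Set.mem_singleton_iff] at hr2ne
        ext x
        simp only [Set.mem_inter_iff, Set.mem_union, Set.mem_singleton_iff,
          Set.mem_empty_iff_false, iff_false, not_and]
        rintro (hx1 | rfl) hx2
        · exact absurd (Set.mem_inter hx2 hx1)
            (by rw [hdisj r2 hr2 r0 hr0τ hr2ne]; exact not_false_iff.mpr trivial)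
        · exact hp'notin r2 hr2 hx2
      · rw [Set.mem_singleton_iff] at hr1 hr2; subst hr1; subst hr2; exact absurd rfl hne
    · rintro m ⟨h, hhmem, rfl⟩
      have hnewmem : r0 ∪ {p'} ∈ (τ \ {r0}) ∪ ({r0 ∪ {p'}} : Set (Set Place)) :=
        Or.inr rfl
      have hr0notin : r0 ∉ (τ \ {r0}) ∪ ({r0 ∪ {p'}} : Set (Set Place)) := by
        rintro (⟨_, h2⟩ | h2)
        · exact h2 rfl
        · rw [Set.mem_singleton_iff] at h2
          exact hp'r0 (h2 ▸ (Or.inr rfl : p' ∈ r0 ∪ {p'}))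
      rcases hhmem _ hnewmem with ha | ha
      · -- h (r0 ∪ {p'}) ∈ r0 : the marking is already in the treaty of τ
        classical
        set g : Set Place → Place := fun r => if r = r0 then h (r0 ∪ {p'}) else h r with hg
        apply htreaty
        refine ⟨g, ?_, ?_⟩
        · intro r hr
          by_cases h1 : r = r0
          · rw [h1]; simp only [hg, if_pos rfl]; exact ha
          · simp [hg, h1]
            exact hhmem r (Or.inl ⟨hr, h1⟩)
        · ext x
          simp only [Set.mem_setOf_eq]
          constructor
          · rintro ⟨r, (⟨hr, hrne⟩ | hr), rfl⟩
            · rw [Set.mem_singleton_iff] at hrne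
              exact ⟨r, hr, by simp [hg, hrne]⟩
            · rw [Set.mem_singleton_iff] at hr; subst hr
              exact ⟨r0, hr0τ, by simp [hg]⟩
          · rintro ⟨r, hr, rfl⟩
            by_cases h1 : r = r0
            · exact ⟨_, Or.inr rfl, by rw [h1]; simp [hg]⟩
            · exact ⟨r, Or.inl ⟨hr, h1⟩, by simp [hg, h1]⟩
      · -- h (r0 ∪ {p'}) = p' : fire t from the treaty marking with p chosen in r0
        rw [Set.mem_singleton_iff] at ha
        classical
        set g : Set Place → Place := fun r => if r = r0 then p else h r with hg
        set m' : Set Place := {x | ∃ r ∈ τ, x = g r} with hm'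
        have hm'reach : N.Reachable m' := by
          apply htreaty
          refine ⟨g, ?_, rfl⟩
          intro r hr
          by_cases h1 : r = r0
          · subst h1; simp [hg]; exact hpr0
          · simp [hg, h1]; exact hhmem r (Or.inl ⟨hr, h1⟩)
        have hpm' : p ∈ m' := ⟨r0, hr0τ, by simp [hg]⟩
        apply N.reachable_step hm'reach (t := t)
        refine ⟨by rw [hp]; exact Set.singleton_subset_iff.mpr hpm', ?_⟩
        rw [hp, hp']
        ext x
        simp only [Set.mem_setOf_eq, Set.mem_union, Set.mem_diff, Set.mem_singleton_iff]
        constructor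
        · rintro ⟨r, (⟨hr, hrne⟩ | hr), rfl⟩
          · have hhr : h r ∈ r := hhmem r (Or.inl ⟨hr, hrne⟩)
            refine Or.inl ⟨show ∃ r' ∈ τ, h r = g r' from ⟨r, hr, by simp [hg, hrne]⟩,
              fun hcontra => ?_⟩
            exact hrne (huniq r hr (hcontra ▸ hhr))
          · subst hr
            exact Or.inr ha
        · rintro (⟨⟨r, hr, rfl⟩, hgne⟩ | rfl)
          · by_cases h1 : r = r0
            · exact absurd (by simp [hg, h1]) hgne
            · exact ⟨r, Or.inl ⟨hr, h1⟩, by simp [hg, h1]⟩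
          · exact ⟨_, Or.inr rfl, ha.symm⟩
  have hsun : ⋃₀ (N.extendT t τ) = insert p' (⋃₀ τ) := by
    rw [hshape]
    ext x
    simp only [Set.mem_sUnion, Set.mem_union, Set.mem_insert_iff, Set.mem_diff,
      Set.mem_singleton_iff]
    constructor
    · rintro ⟨r, (⟨hr, _⟩ | rfl), hx⟩
      · exact Or.inr ⟨r, hr, hx⟩
      · rcases hx with hx | hx
        · exact Or.inr ⟨r0, hr0τ, hx⟩
        · exact Or.inl hx
    · rintro (rfl | ⟨r, hr, hx⟩)
      · exact ⟨_, Or.inr rfl, Or.inr rfl⟩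
      · by_cases h1 : r = r0
        · exact ⟨_, Or.inr rfl, Or.inl (h1 ▸ hx)⟩
        · exact ⟨r, Or.inl ⟨hr, h1⟩, hx⟩
  exact ⟨r0, p, p', hp, hp', hr0τ, hpr0, hp'notin, hshape, hnewreg, hterr, hsun⟩


lemma sat_exists [Fintype Place] {Φ : Type*} (postA : Φ → Trans → Φ) (φ : Φ)
    (rb : Set (Set Place)) :
    ∀ (n : ℕ) (τ : Set (Set Place)), N.IsTerritory τ →
      Fintype.card Place - (⋃₀ τ).ncard ≤ n → ∃ τ', N.SaturateG postA φ rb τ τ' := by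
  intro n
  induction n with
  | zero =>
    intro τ hτ hn
    by_cases hc : ∃ t, N.extendable t τ ∧ ¬ N.terrFires τ t τ ∧ postA φ t = φ ∧
        rb ⊆ N.bystanders t τ
    · exfalso
      obtain ⟨t, hext, hnf, _, _⟩ := hc
      obtain ⟨r0, p, p', _, _, _, _, hp'notin, _, _, _, hsun⟩ := N.extend_key hτ hext hnf
      have h1 : p' ∉ ⋃₀ τ := by rintro ⟨r, hr, hx⟩; exact hp'notin r hr hx
      have h2 : (insert p' (⋃₀ τ)).ncard = (⋃₀ τ).ncard + 1 :=
        Set.ncard_insert_of_notMem h1 (Set.toFinite _)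
      have h3 : (insert p' (⋃₀ τ)).ncard ≤ Fintype.card Place := by
        have := Set.ncard_le_ncard (Set.subset_univ (insert p' (⋃₀ τ))) (Set.toFinite _)
        rwa [Set.ncard_univ, Nat.card_eq_fintype_card] at this
      omega
    · exact ⟨τ, SaturateG.base hc⟩
  | succ n ih =>
    intro τ hτ hn
    by_cases hc : ∃ t, N.extendable t τ ∧ ¬ N.terrFires τ t τ ∧ postA φ t = φ ∧
        rb ⊆ N.bystanders t τ
    · obtain ⟨t, hext, hnf, hpost, hsub⟩ := hc
      obtain ⟨r0, p, p', _, _, _, _, hp'notin, _, _, hterr, hsun⟩ := N.extend_key hτ hext hnf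
      have h1 : p' ∉ ⋃₀ τ := by rintro ⟨r, hr, hx⟩; exact hp'notin r hr hx
      have h2 : (⋃₀ (N.extendT t τ)).ncard = (⋃₀ τ).ncard + 1 := by
        rw [hsun]; exact Set.ncard_insert_of_notMem h1 (Set.toFinite _)
      obtain ⟨τ', hτ'⟩ := ih (N.extendT t τ) hterr (by omega)
      exact ⟨τ', SaturateG.step hext hnf hpost hsub hτ'⟩
    · exact ⟨τ, SaturateG.base hc⟩

lemma sat_fires {Φ : Type*} {postA : Φ → Trans → Φ} {φ : Φ}
    {τ : Set (Set Place)} {t : Trans} (hτ : N.IsTerritory τ)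
    {σ τ'' : Set (Set Place)}
    (hsat : N.SaturateG postA φ (N.bystanders t τ) σ τ'') :
    N.IsTerritory σ → N.terrFires τ t σ → N.terrFires τ t τ'' := by
  induction hsat with
  | base _ => exact fun _ h => h
  | @step σ t1 τ1 hext hnf hpost hsub hrec ih =>
    intro hσ hfires
    obtain ⟨r0, p1, p1', hp1, hp1', hr0σ, hp1r0, hp1'notin, hshape, hnewreg, hterr, _⟩ :=
      N.extend_key hσ hext hnf
    obtain ⟨f, f', hf1, hf2, hf3, hf4, hσeq⟩ := hfires
    set F : Set (Set Place) := {r | ∃ q ∈ N.pre t, r = f q} with hF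
    set G : Set (Set Place) := {r | ∃ q ∈ N.post t, r = f' q} with hG
    -- r0 is not a bystander of t in τ, hence comes from G
    have hr0nτF : r0 ∉ τ \ F := by
      rintro ⟨hr0τ, hr0F⟩
      have hbys : r0 ∈ N.bystanders t τ := by
        refine ⟨hr0τ, ?_⟩
        ext q
        simp only [Set.mem_inter_iff, Set.mem_empty_iff_false, iff_false, not_and]
        intro hqr0 hqpre
        obtain ⟨hfqτ, hqfq⟩ := hf1 q hqpre
        have hne : r0 ≠ f q := fun h => hr0F ⟨q, hqpre, h⟩
        exact absurd (Set.mem_inter hqr0 hqfq)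
          (by rw [hτ.2.1 r0 hr0τ (f q) hfqτ hne]; exact not_false_iff.mpr trivial)
      have := (hsub hbys).2
      exact absurd (Set.mem_inter hp1r0 (show p1 ∈ N.pre t1 by rw [hp1]; rfl))
        (by rw [this]; exact not_false_iff.mpr trivial)
    have hr0G : ∃ q0 ∈ N.post t, r0 = f' q0 := by
      rcases (hσeq ▸ hr0σ : r0 ∈ (τ \ F) ∪ G) with h | h
      · exact absurd h hr0nτF
      · exact h
    obtain ⟨q0, hq0mem, hq0⟩ := hr0G
    classical
    set g' : Place → Set Place := fun q => if f' q = r0 then r0 ∪ {p1'} else f' q with hg'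
    have hmemσ : ∀ q ∈ N.post t, f' q ∈ (τ \ F) ∪ G := fun q hq => Or.inr ⟨q, hq, rfl⟩
    have hp1'f' : ∀ q ∈ N.post t, p1' ∉ f' q := by
      intro q hq
      exact hp1'notin (f' q) (by rw [hσeq]; exact hmemσ q hq)
    refine ih hterr ⟨f, g', hf1, hf2, ?_, ?_, ?_⟩
    · intro q hq
      by_cases h : f' q = r0
      · refine ⟨by simp only [hg', if_pos h]; exact hnewreg, ?_⟩
        simp only [hg', if_pos h]
        exact Or.inl (h ▸ (hf3 q hq).2)
      · simp only [hg', if_neg h]; exact hf3 q hq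
    · intro q1 hq1 q2 hq2 hne
      have hf'ne := hf4 q1 hq1 q2 hq2 hne
      simp only [hg']
      by_cases h1 : f' q1 = r0 <;> by_cases h2 : f' q2 = r0
      · exact absurd (h1.trans h2.symm) hf'ne
      · rw [if_pos h1, if_neg h2]
        intro heq
        exact hp1'f' q2 hq2 (heq ▸ (Or.inr rfl : p1' ∈ r0 ∪ {p1'}))
      · rw [if_neg h1, if_pos h2]
        intro heq
        exact hp1'f' q1 hq1 (heq ▸ (Or.inr rfl : p1' ∈ r0 ∪ {p1'}))
      · rw [if_neg h1, if_neg h2]; exact hf'ne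
    · rw [hshape, hσeq]
      ext x
      constructor
      · rintro (⟨h | ⟨q, hq, rfl⟩, hxne⟩ | hx)
        · exact Or.inl h
        · have hne : f' q ≠ r0 := fun h => hxne (Set.mem_singleton_iff.mpr h)
          exact Or.inr ⟨q, hq, by simp only [hg', if_neg hne]⟩
        · rw [Set.mem_singleton_iff] at hx
          exact Or.inr ⟨q0, hq0mem, by simp only [hg', if_pos hq0.symm]; exact hx⟩
      · rintro (h | ⟨q, hq, rfl⟩)
        · exact Or.inl ⟨Or.inl h, fun hx => hr0nτF (Set.mem_singleton_iff.mp hx ▸ h)⟩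
        · by_cases h : f' q = r0
          · refine Or.inr ?_
            simp only [hg', if_pos h]
            rfl
          · refine Or.inl ⟨Or.inr ⟨q, hq, by simp only [hg', if_neg h]⟩, ?_⟩
            simp only [hg', if_neg h]
            intro hx
            exact h (Set.mem_singleton_iff.mp hx)


end PetriNet
end GhostsOfEmpires
open GhostsOfEmpires in
/-- For every territory `τ`, formula `φ ∈ A` and set `rb` of regions,
the set `saturate(φ, rb, τ)` of saturated successors is nonempty. Moreover, for all
territories `τ, τ'` and transitions `t` with `τ ▷t τ'` and `rb = bystanders(t,τ)`,
it holds that `τ ▷t τ''` for every `τ'' ∈ saturate(φ, rb, τ')`. -/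
theorem statement14 {Place Trans Stmt State : Type*}
    [Fintype Place] [Fintype Trans] [Fintype Stmt]
    (N : PetriNet Place Trans Stmt State)
    (D : N.InvDomain) (φ : State → Prop) (hφ : φ ∈ D.A)
    (rb : Set (Set Place)) (hrb : ∀ r ∈ rb, N.IsRegion r) :
    (∀ τ, N.IsTerritory τ → ∃ τ', N.SaturateG D.postF φ rb τ τ') ∧
    (∀ τ τ' t, N.IsTerritory τ → N.IsTerritory τ' → N.terrFires τ t τ' →
      rb = N.bystanders t τ →
      ∀ τ'', N.SaturateG D.postF φ rb τ' τ'' → N.terrFires τ t τ'') := by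
  constructor
  · intro τ hτ
    exact N.sat_exists D.postF φ rb (Fintype.card Place) τ hτ (Nat.sub_le _ _)
  · intro τ τ' t hτ hτ' hfires hrb τ'' hsat
    subst hrb
    exact N.sat_fires hτ hsat hτ' hfires
end

section
/- Let E be a saturated empire, let ⟨τ,φ⟩ be a state of E, and let t be a transition such that ⟨τ',φ'⟩ = δ(⟨τ,φ⟩,t) is defined. Then τ ▷t τ' holds, and the Hoare triple {φ} λ(t) {φ'} holds. -/
/-!
Reachable states of a saturated empire carry territories: a selection of one place per region
of `replace(t,τ)` or `extend(t,τ)` is either a treaty marking of `τ` or is reached from one by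
firing `t`. Saturation only enlarges regions that are not bystanders, so the territory reached
from `replace(t,τ)` consists of the bystanders and one region around each place of `t•`. Distinct
places of `t•` are co-marked after firing `t` and therefore lie in distinct regions, which gives
`τ ▷t τ'`. The Hoare triple is the defining property of `post`, applied to the law `φ ∈ A`.
-/

namespace GhostsOfEmpires

def regionOf {Place : Type*} (τ : Set (Set Place)) (p : Place) : Set Place :=
  ⋃₀ {r ∈ τ | p ∈ r}

lemma pairwiseDisjoint_singletons {α : Type*} (s : Set α) :
    {r : Set α | ∃ p ∈ s, r = {p}}.PairwiseDisjoint id := by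
  rintro _ ⟨p, -, rfl⟩ _ ⟨q, -, rfl⟩ hne
  exact Set.disjoint_singleton.mpr fun h => hne (h ▸ rfl)

lemma image_singletons {α : Type*} {s : Set α} {c : Set α → α}
    (hc : ∀ r ∈ {r : Set α | ∃ p ∈ s, r = {p}}, c r ∈ r) :
    c '' {r : Set α | ∃ p ∈ s, r = {p}} = s := by
  ext p
  constructor
  · rintro ⟨_, ⟨q, hq, rfl⟩, rfl⟩
    rwa [hc {q} ⟨q, hq, rfl⟩]
  · intro hp
    exact ⟨{p}, ⟨p, hp, rfl⟩, hc {p} ⟨p, hp, rfl⟩⟩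

lemma exists_selection {α : Type*} {S T : Set (Set α)} (hS : ∀ r ∈ S, r.Nonempty)
    (g : Set α → α) (hg : ∀ r ∈ T, g r ∈ r) :
    ∃ c : Set α → α, (∀ r ∈ S, c r ∈ r) ∧ ∀ r ∈ T, c r = g r := by
  classical
  refine ⟨T.piecewise g fun r => if h : r.Nonempty then h.some else g r, fun r hr => ?_,
    fun r hr => Set.piecewise_eq_of_mem _ _ _ hr⟩
  by_cases hrT : r ∈ T
  · rw [Set.piecewise_eq_of_mem _ _ _ hrT]
    exact hg r hrT
  · rw [Set.piecewise_eq_of_notMem _ _ _ hrT, dif_pos (hS r hr)]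
    exact (hS r hr).some_mem

namespace PetriNet

variable {Place Trans Stmt State : Type*} {N : PetriNet Place Trans Stmt State}
  {τ : Set (Set Place)} {t : Trans}

lemma coRelated_comm {p p' : Place} : N.coRelated p p' ↔ N.coRelated p' p :=
  ⟨fun ⟨hne, m, hm, h, h'⟩ => ⟨hne.symm, m, hm, h', h⟩,
    fun ⟨hne, m, hm, h, h'⟩ => ⟨hne.symm, m, hm, h', h⟩⟩

lemma FiringSeq.snoc {m m' m'' : Set Place} {ts : List Trans}
    (h : N.FiringSeq m ts m') (h' : N.fires m' t m'') : N.FiringSeq m (ts ++ [t]) m'' := by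
  induction h with
  | nil => exact .cons h' (.nil _)
  | cons hf _ ih => exact .cons hf (ih h')

lemma Reachable.fires {m m' : Set Place} (h : N.Reachable m) (hf : N.fires m t m') :
    N.Reachable m' :=
  let ⟨ts, hts⟩ := h
  ⟨ts ++ [t], hts.snoc hf⟩

lemma isRegion_singleton (p : Place) : N.IsRegion {p} :=
  ⟨Set.singleton_nonempty p, fun _ h1 _ h2 hco => hco.1 (h1.trans h2.symm)⟩

lemma notMem_bystanders {r : Set Place} {p : Place} (hpr : p ∈ r) (hp : p ∈ N.pre t) :
    r ∉ N.bystanders t τ :=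
  fun hr => (Set.eq_empty_iff_forall_notMem.mp hr.2) p ⟨hpr, hp⟩

lemma exists_superset_mem_extendT {r : Set Place} (hr : r ∈ τ) :
    ∃ r' ∈ N.extendT t τ, r ⊆ r' := by
  by_cases hrb : r ∈ N.bystanders t τ
  · exact ⟨r, Or.inl hrb, subset_rfl⟩
  · exact ⟨r ∪ N.post t,
      Or.inr ⟨r, hr, Set.nonempty_iff_ne_empty.mpr fun h => hrb ⟨hr, h⟩, rfl⟩,
      Set.subset_union_left⟩

namespace IsTerritory

lemma of_pairwiseDisjoint (hreg : ∀ r ∈ τ, N.IsRegion r) (hdisj : τ.PairwiseDisjoint id)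
    (hreach : ∀ c : Set Place → Place, (∀ r ∈ τ, c r ∈ r) → N.Reachable (c '' τ)) :
    N.IsTerritory τ := by
  refine ⟨hreg, fun r1 h1 r2 h2 hne => Set.disjoint_iff_inter_eq_empty.mp (hdisj h1 h2 hne), ?_⟩
  rintro m ⟨c, hc, rfl⟩
  convert hreach c hc using 1
  ext p
  simp [eq_comm]

variable (hτ : N.IsTerritory τ)
include hτ

lemma pairwiseDisjoint : τ.PairwiseDisjoint id :=
  fun _ h1 _ h2 hne => Set.disjoint_iff_inter_eq_empty.mpr (hτ.2.1 _ h1 _ h2 hne)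

lemma reachable_image {c : Set Place → Place} (hc : ∀ r ∈ τ, c r ∈ r) :
    N.Reachable (c '' τ) :=
  hτ.2.2 _ ⟨c, hc, by ext p; simp [eq_comm]⟩

lemma eq_of_mem {r1 r2 : Set Place} (h1 : r1 ∈ τ) (h2 : r2 ∈ τ) {p : Place} (hp1 : p ∈ r1)
    (hp2 : p ∈ r2) : r1 = r2 :=
  hτ.pairwiseDisjoint.elim h1 h2 (Set.not_disjoint_iff.mpr ⟨p, hp1, hp2⟩)

lemma regionOf_eq {r : Set Place} {p : Place} (hr : r ∈ τ) (hp : p ∈ r) :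
    regionOf τ p = r := by
  ext q
  simp only [regionOf, Set.mem_sUnion, Set.mem_ofPred_eq]
  constructor
  · rintro ⟨r', ⟨hr', hpr'⟩, hq⟩
    rwa [hτ.eq_of_mem hr' hr hpr' hp] at hq
  · exact fun hq => ⟨r, ⟨hr, hp⟩, hq⟩

lemma coRelated_of_mem {r1 r2 : Set Place} (h1 : r1 ∈ τ) (h2 : r2 ∈ τ) (hne : r1 ≠ r2)
    {p1 p2 : Place} (hp1 : p1 ∈ r1) (hp2 : p2 ∈ r2) : N.coRelated p1 p2 := by
  classical
  obtain ⟨c, hc, hcg⟩ := exists_selection (T := {r1, r2}) (fun r hr => (hτ.1 r hr).1)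
    (fun r => if r = r1 then p1 else p2) (by rintro r (rfl | rfl) <;> simp [hp1, hp2, hne.symm])
  refine ⟨fun h => hne (hτ.eq_of_mem h1 h2 hp1 (h ▸ hp2)), _, hτ.reachable_image hc,
    ⟨r1, h1, ?_⟩, ⟨r2, h2, ?_⟩⟩
  · simp [hcg r1 (by simp)]
  · simp [hcg r2 (by simp), hne.symm]

lemma diff_eq_bystanders {f : Place → Set Place} (hf : ∀ p ∈ N.pre t, f p ∈ τ ∧ p ∈ f p) :
    τ \ {r | ∃ p ∈ N.pre t, r = f p} = N.bystanders t τ := by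
  ext r
  constructor
  · rintro ⟨hr, hnf⟩
    exact ⟨hr, Set.eq_empty_iff_forall_notMem.mpr fun p ⟨hpr, hp⟩ =>
      hnf ⟨p, hp, hτ.eq_of_mem hr (hf p hp).1 hpr (hf p hp).2⟩⟩
  · rintro hrb
    exact ⟨hrb.1, fun ⟨p, hp, hrp⟩ => notMem_bystanders (hrp ▸ (hf p hp).2) hp hrb⟩

/-- Fire `t` from the treaty marking of `τ` that extends `c` by the places of `•t`. -/
lemma reachable_image_bystanders_union_post (hen : N.terrEnabled t τ) {c : Set Place → Place}
    (hc : ∀ r ∈ N.bystanders t τ, c r ∈ r) :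
    N.Reachable (c '' N.bystanders t τ ∪ N.post t) := by
  classical
  obtain ⟨f, hf, hfinj⟩ := hen
  let c' : Set Place → Place := fun r => if h : (r ∩ N.pre t).Nonempty then h.some else c r
  have hc'byst : ∀ r ∈ N.bystanders t τ, c' r = c r := fun r hrb => by
    simp only [c', dif_neg (Set.not_nonempty_iff_eq_empty.mpr hrb.2)]
  have hc'pre : ∀ r ∈ τ, r ∉ N.bystanders t τ → c' r ∈ r ∩ N.pre t := fun r hr hrb => by
    have hne : (r ∩ N.pre t).Nonempty := Set.nonempty_iff_ne_empty.mpr fun h => hrb ⟨hr, h⟩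
    simpa only [c', dif_pos hne] using hne.some_mem
  have hc' : ∀ r ∈ τ, c' r ∈ r := fun r hr => by
    by_cases hrb : r ∈ N.bystanders t τ
    · exact hc'byst r hrb ▸ hc r hrb
    · exact (hc'pre r hr hrb).1
  have hpre : N.pre t ⊆ c' '' τ := by
    intro p hp
    obtain ⟨hq, hqpre⟩ := hc'pre _ (hf p hp).1 (notMem_bystanders (hf p hp).2 hp)
    refine ⟨f p, (hf p hp).1, by_contra fun hne => ?_⟩
    exact hfinj _ hqpre p hp hne (hτ.eq_of_mem (hf _ hqpre).1 (hf p hp).1 (hf _ hqpre).2 hq)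
  have hdiff : c' '' τ \ N.pre t = c '' N.bystanders t τ := by
    ext p
    constructor
    · rintro ⟨⟨r, hr, rfl⟩, hp⟩
      by_cases hrb : r ∈ N.bystanders t τ
      · exact ⟨r, hrb, (hc'byst r hrb).symm⟩
      · exact absurd (hc'pre r hr hrb).2 hp
    · rintro ⟨r, hrb, rfl⟩
      exact ⟨⟨r, hrb.1, hc'byst r hrb⟩, fun hp => notMem_bystanders (hc r hrb) hp hrb⟩
  rw [← hdiff]
  exact (hτ.reachable_image hc').fires ⟨hpre, rfl⟩

lemma coRelated_of_mem_post (hen : N.terrEnabled t τ) {p1 p2 : Place} (h1 : p1 ∈ N.post t)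
    (h2 : p2 ∈ N.post t) (hne : p1 ≠ p2) : N.coRelated p1 p2 := by
  obtain ⟨c, hc, -⟩ := exists_selection (S := N.bystanders t τ) (T := ∅)
    (fun r hr => (hτ.1 r hr.1).1) (fun _ => p1) (by simp)
  exact ⟨hne, _, hτ.reachable_image_bystanders_union_post hen hc, Or.inr h1, Or.inr h2⟩

lemma eq_singleton_of_mem_bystanders (hen : N.terrEnabled t τ) {r : Set Place} {p : Place}
    (hr : r ∈ N.bystanders t τ) (hp : p ∈ N.post t) (hpr : p ∈ r) : r = {p} := by
  refine Set.eq_singleton_iff_unique_mem.mpr ⟨hpr, fun q hq => by_contra fun hqp => ?_⟩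
  obtain ⟨c, hc, hcq⟩ := exists_selection (S := N.bystanders t τ) (T := {r})
    (fun r' hr' => (hτ.1 r' hr'.1).1) (fun _ => q) (by simpa using hq)
  exact (hτ.1 r hr.1).2 q hq p hpr ⟨hqp, _, hτ.reachable_image_bystanders_union_post hen hc,
    Or.inl ⟨r, hr, hcq r rfl⟩, Or.inr hp⟩

lemma replaceT (hen : N.terrEnabled t τ) : N.IsTerritory (N.replaceT t τ) := by
  refine of_pairwiseDisjoint ?_ ?_ fun c hc => ?_
  · rintro r (hr | ⟨p, -, rfl⟩)
    exacts [hτ.1 r hr.1, isRegion_singleton p]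
  · refine Set.pairwiseDisjoint_union.mpr ⟨hτ.pairwiseDisjoint.subset fun r hr => hr.1,
      pairwiseDisjoint_singletons _, ?_⟩
    rintro r hr _ ⟨p, hp, rfl⟩ hne
    exact Set.disjoint_singleton_right.mpr fun hpr =>
      hne (hτ.eq_singleton_of_mem_bystanders hen hr hp hpr)
  · rw [PetriNet.replaceT, Set.image_union, image_singletons fun r hr => hc r (Or.inr hr)]
    exact hτ.reachable_image_bystanders_union_post hen fun r hr => hc r (Or.inl hr)

section extend

variable {a : Place} {ra : Set Place} (hpre : N.pre t = {a}) (hra : ra ∈ τ) (ha : a ∈ ra)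
include hpre hra ha

lemma bystanders_eq_diff : N.bystanders t τ = τ \ {ra} := by
  ext r
  simp only [bystanders, hpre, Set.mem_ofPred_eq, Set.inter_singleton_eq_empty, Set.mem_sdiff,
    Set.mem_singleton_iff]
  exact and_congr_right fun hr =>
    ⟨fun har h => har (h ▸ ha), fun hne har => hne (hτ.eq_of_mem hr hra har ha)⟩

lemma extendT_eq_insert : N.extendT t τ = insert (ra ∪ N.post t) (N.bystanders t τ) := by
  rw [Set.insert_eq, Set.union_comm, extendT]
  congr 1
  ext r'
  simp only [hpre, Set.inter_singleton_nonempty, Set.mem_ofPred_eq, Set.mem_singleton_iff]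
  exact ⟨fun ⟨r, hr, har, h⟩ => hτ.eq_of_mem hr hra har ha ▸ h, fun h => ⟨ra, hra, ha, h⟩⟩

end extend

lemma isRegion_union_post (hext : N.extendable t τ) {r : Set Place} (hr : r ∈ τ)
    (hmeet : (r ∩ N.pre t).Nonempty) : N.IsRegion (r ∪ N.post t) := by
  obtain ⟨-, -, ⟨b, hpost⟩, hnco⟩ := hext
  refine ⟨(hτ.1 r hr).1.mono Set.subset_union_left, ?_⟩
  rintro p1 (h1 | h1) p2 (h2 | h2) hco
  · exact (hτ.1 r hr).2 p1 h1 p2 h2 hco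
  · exact hnco r hr hmeet p1 h1 p2 h2 (coRelated_comm.mp hco)
  · exact hnco r hr hmeet p2 h2 p1 h1 hco
  · rw [hpost] at h1 h2
    exact hco.1 (h1.trans h2.symm)

lemma extendT (hext : N.extendable t τ) : N.IsTerritory (N.extendT t τ) := by
  obtain ⟨⟨f, hf, -⟩, ⟨a, hpre⟩, ⟨b, hpost⟩, hnco⟩ := id hext
  have ha : a ∈ N.pre t := hpre ▸ rfl
  have hb : b ∈ N.post t := hpost ▸ rfl
  obtain ⟨hra, har⟩ := hf a ha
  have hmeet : (f a ∩ N.pre t).Nonempty := ⟨a, har, ha⟩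
  have hbys := hτ.bystanders_eq_diff hpre hra har
  rw [hτ.extendT_eq_insert hpre hra har]
  refine of_pairwiseDisjoint ?_ ?_ fun c hc => ?_
  · rintro r (rfl | hr)
    exacts [hτ.isRegion_union_post hext hra hmeet, hτ.1 r hr.1]
  · refine (hτ.pairwiseDisjoint.subset fun r hr => hr.1).insert fun r hr _ => ?_
    rw [hbys] at hr
    refine Disjoint.union_left (hτ.pairwiseDisjoint hra hr.1 (Ne.symm hr.2)) ?_
    rw [hpost, Set.disjoint_singleton_left]
    exact fun hbr => hnco _ hra hmeet a har b hb (hτ.coRelated_of_mem hr.1 hra hr.2 hbr har)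
  · rw [Set.image_insert_eq]
    rcases hc _ (Set.mem_insert _ _) with hcr | hcb
    · have hτeq : τ = insert (f a) (N.bystanders t τ) := by
        rw [hbys, Set.insert_sdiff_self_of_mem hra]
      have hc' : Function.update c (f a) (c (f a ∪ N.post t)) '' τ
          = insert (c (f a ∪ N.post t)) (c '' N.bystanders t τ) := by
        conv_lhs => rw [hτeq]
        rw [Set.image_insert_eq, Function.update_self]
        congr 1
        exact Set.image_congr fun r hr => Function.update_of_ne (hbys ▸ hr).2 _ _
      rw [← hc']
      refine hτ.reachable_image fun r hr => ?_
      by_cases hra' : r = f a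
      · subst hra'
        simpa using hcr
      · simpa [hra'] using hc r (Or.inr (hbys ▸ ⟨hr, hra'⟩))
    · have hcb' : {c (f a ∪ N.post t)} = N.post t := by
        rw [hpost] at hcb ⊢
        rw [Set.mem_singleton_iff.mp hcb]
      rw [Set.insert_eq, Set.union_comm, hcb']
      exact hτ.reachable_image_bystanders_union_post hext.1
        fun r hr => hc r (Or.inr hr)

end IsTerritory

lemma isTerritory_tauInit : N.IsTerritory N.tauInit := by
  refine IsTerritory.of_pairwiseDisjoint ?_ (pairwiseDisjoint_singletons _) fun c hc => ?_
  · rintro _ ⟨p, -, rfl⟩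
    exact isRegion_singleton p
  · rw [tauInit, image_singletons hc]
    exact ⟨[], .nil _⟩

namespace SaturateG

variable {Φ : Type*} {postA : Φ → Trans → Φ} {φ : Φ} {rb σ σ' : Set (Set Place)}

lemma isTerritory (hs : N.SaturateG postA φ rb σ σ') (hσ : N.IsTerritory σ) :
    N.IsTerritory σ' := by
  induction hs with
  | base _ => exact hσ
  | step hext _ _ _ _ ih => exact ih (hσ.extendT hext)

lemma subset (hs : N.SaturateG postA φ rb σ σ') (hrb : rb ⊆ σ) : rb ⊆ σ' := by
  induction hs with
  | base _ => exact hrb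
  | step _ _ _ hby _ ih => exact ih (hby.trans Set.subset_union_left)

lemma exists_superset (hs : N.SaturateG postA φ rb σ σ') {r : Set Place} (hr : r ∈ σ) :
    ∃ r' ∈ σ', r ⊆ r' := by
  induction hs generalizing r with
  | base _ => exact ⟨r, hr, subset_rfl⟩
  | step _ _ _ _ _ ih =>
    obtain ⟨r1, hr1, hsub1⟩ := exists_superset_mem_extendT hr
    obtain ⟨r', hr', hsub⟩ := ih hr1
    exact ⟨r', hr', hsub1.trans hsub⟩

lemma mem_or_exists_subset (hs : N.SaturateG postA φ rb σ σ') {r' : Set Place} (hr' : r' ∈ σ') :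
    r' ∈ rb ∨ ∃ r ∈ σ, r ∉ rb ∧ r ⊆ r' := by
  induction hs with
  | base _ => exact or_iff_not_imp_left.mpr fun h => ⟨r', hr', h, subset_rfl⟩
  | step _ _ _ hby _ ih =>
    refine (ih hr').imp_right ?_
    rintro ⟨r1, hr1 | ⟨r, hr, hmeet, rfl⟩, hr1rb, hsub⟩
    · exact ⟨r1, hr1.1, hr1rb, hsub⟩
    · exact ⟨r, hr, fun h => hmeet.ne_empty (hby h).2, Set.subset_union_left.trans hsub⟩

end SaturateG

lemma IsTerritory.terrFires_of_saturateG {Φ : Type*} {postA : Φ → Trans → Φ} {ψ : Φ}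
    {τ' : Set (Set Place)} (hτ : N.IsTerritory τ) (hen : N.terrEnabled t τ)
    (hs : N.SaturateG postA ψ (N.bystanders t τ) (N.replaceT t τ) τ') :
    N.terrFires τ t τ' := by
  have hτ' := hs.isTerritory (hτ.replaceT hen)
  have hreg : ∀ p ∈ N.post t, regionOf τ' p ∈ τ' ∧ p ∈ regionOf τ' p := fun p hp => by
    obtain ⟨r', hr', hsub⟩ := hs.exists_superset (Or.inr ⟨p, hp, rfl⟩)
    rw [hτ'.regionOf_eq hr' (hsub rfl)]
    exact ⟨hr', hsub rfl⟩
  obtain ⟨f, hf, hfinj⟩ := id hen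
  refine ⟨f, regionOf τ', hf, hfinj, fun p hp => ⟨hτ'.1 _ (hreg p hp).1, (hreg p hp).2⟩,
    fun p1 h1 p2 h2 hne heq => ?_, ?_⟩
  · exact (hτ'.1 _ (hreg p1 h1).1).2 p1 (hreg p1 h1).2 p2 (heq ▸ (hreg p2 h2).2)
      (hτ.coRelated_of_mem_post hen h1 h2 hne)
  · rw [hτ.diff_eq_bystanders hf]
    ext r'
    constructor
    · intro hr'
      rcases hs.mem_or_exists_subset hr' with hrb | ⟨r, hr | ⟨p, hp, rfl⟩, hrb, hsub⟩
      · exact Or.inl hrb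
      · exact absurd hr hrb
      · exact Or.inr ⟨p, hp, (hτ'.regionOf_eq hr' (hsub rfl)).symm⟩
    · rintro (hrb | ⟨p, hp, rfl⟩)
      exacts [hs.subset Set.subset_union_left hrb, (hreg p hp).1]

namespace IsSaturatedG

variable {Φ : Type*} {postA : Φ → Trans → Φ} {interp : Φ → State → Prop} {φtop : Φ}
  {q0 : Set (Set Place) × Φ} {δ0 : Set (Set Place) × Φ → Trans → Option (Set (Set Place) × Φ)}
  (hsat : N.IsSaturatedG postA interp φtop q0 δ0)
include hsat

lemma step_cases {φ φ' : Φ} {τ' : Set (Set Place)} (hδ : δ0 (τ, φ) t = some (τ', φ')) :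
    N.terrEnabled t τ ∧ φ' = postA φ t ∧
      (τ' = τ ∧ N.terrFires τ t τ ∨
        N.SaturateG postA (postA φ t) (N.bystanders t τ) (N.replaceT t τ) τ') := by
  have hdef : N.terrEnabled t τ ∧ ∃ s, interp (postA φ t) s := by
    by_contra h
    rw [hsat.undefCond τ φ t ((not_and_or.mp h).imp_right not_exists.mp)] at hδ
    cases hδ
  obtain ⟨hen, hs⟩ := hdef
  by_cases hself : N.terrFires τ t τ ∧ postA φ t = φ
  · rw [hsat.selfCond τ φ t hen hs hself.1 hself.2] at hδ
    obtain ⟨rfl, rfl⟩ := Prod.mk.inj (Option.some.inj hδ)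
    exact ⟨hen, hself.2.symm, Or.inl ⟨rfl, hself.1⟩⟩
  · obtain ⟨τ'', hs'', hδ''⟩ := hsat.stepCond τ φ t hen hs hself
    rw [hδ''] at hδ
    obtain ⟨rfl, rfl⟩ := Prod.mk.inj (Option.some.inj hδ)
    exact ⟨hen, rfl, Or.inr hs''⟩

lemma isTerritory_terrFires_of_step {φ φ' : Φ} {τ' : Set (Set Place)} (hτ : N.IsTerritory τ)
    (hδ : δ0 (τ, φ) t = some (τ', φ')) :
    N.IsTerritory τ' ∧ N.terrFires τ t τ' ∧ φ' = postA φ t := by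
  obtain ⟨hen, rfl, ⟨rfl, hfires⟩ | hs⟩ := hsat.step_cases hδ
  · exact ⟨hτ, hfires, rfl⟩
  · exact ⟨hs.isTerritory (hτ.replaceT hen), hτ.terrFires_of_saturateG hen hs, rfl⟩

lemma isTerritory_and_mem_of_reach {S : Set Φ} (htop : φtop ∈ S)
    (hpost : ∀ φ ∈ S, ∀ t, postA φ t ∈ S) {q : Set (Set Place) × Φ} (hq : EmpReach q0 δ0 q) :
    N.IsTerritory q.1 ∧ q.2 ∈ S := by
  induction hq with
  | init =>
    obtain ⟨τ, hs, rfl⟩ := hsat.initCond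
    exact ⟨hs.isTerritory isTerritory_tauInit, htop⟩
  | @step q t q' _ hδ ih =>
    obtain ⟨τ, φ⟩ := q
    obtain ⟨τ', φ'⟩ := q'
    obtain ⟨hτ', -, rfl⟩ := hsat.isTerritory_terrFires_of_step ih.1 hδ
    exact ⟨hτ', hpost φ ih.2 t⟩

end IsSaturatedG

end PetriNet

end GhostsOfEmpires

open GhostsOfEmpires in
theorem statement15_general {Place Trans Stmt State : Type*}
    (N : PetriNet Place Trans Stmt State)
    (D : N.InvDomain)
    (q0 : Set (Set Place) × (State → Prop))
    (δ0 : Set (Set Place) × (State → Prop) → Trans →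
      Option (Set (Set Place) × (State → Prop)))
    (hsat : N.IsSaturatedG D.postF (fun φ => φ) (fun _ => True) q0 δ0)
    (τ : Set (Set Place)) (φ : State → Prop) (hstate : EmpReach q0 δ0 (τ, φ))
    (t : Trans) (τ' : Set (Set Place)) (φ' : State → Prop)
    (hδ : δ0 (τ, φ) t = some (τ', φ')) :
    N.terrFires τ t τ' ∧ N.Hoare φ (N.label t) φ' := by
  obtain ⟨hτ, hφ⟩ := hsat.isTerritory_and_mem_of_reach D.top_mem D.post_mem hstate
  obtain ⟨-, hfires, rfl⟩ := hsat.isTerritory_terrFires_of_step hτ hδ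
  exact ⟨hfires, D.post_hoare φ hφ t⟩

open GhostsOfEmpires in
/-- Let `E` be a saturated empire, let `⟨τ,φ⟩` be a state of `E`, and
let `t` be a transition such that `⟨τ',φ'⟩ = δ(⟨τ,φ⟩,t)` is defined. Then `τ ▷t τ'`
holds, and the Hoare triple `{φ} λ(t) {φ'}` holds. -/
theorem statement15 {Place Trans Stmt State : Type*}
    [Fintype Place] [Fintype Trans] [Fintype Stmt] [Nonempty State]
    (N : PetriNet Place Trans Stmt State)
    (D : N.InvDomain) (hD : N.SafeDomain D)
    (q0 : Set (Set Place) × (State → Prop))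
    (δ0 : Set (Set Place) × (State → Prop) → Trans →
      Option (Set (Set Place) × (State → Prop)))
    (hsat : N.IsSaturatedG D.postF (fun φ => φ) (fun _ => True) q0 δ0)
    (τ : Set (Set Place)) (φ : State → Prop) (hstate : EmpReach q0 δ0 (τ, φ))
    (t : Trans) (τ' : Set (Set Place)) (φ' : State → Prop)
    (hδ : δ0 (τ, φ) t = some (τ', φ')) :
    N.terrFires τ t τ' ∧ N.Hoare φ (N.label t) φ' :=
  statement15_general N D q0 δ0 hsat τ φ hstate t τ' φ' hδ
end

section
/- Let (A,post) = (A_1,post_1) ⊗ ... ⊗ (A_n,post_n) be a safe product invariant domain, E a corresponding saturated empire, and ℓ a focus on E. Let P̂ be a subset of a reachable marking, t a transition with •t ⊆ P̂, and q, q' states of E with δ(q,t) = q'. Writing law_X(q) = ⋀_{p∈X} law_p(q) for a set X of places, the Hoare triple {law_P̂(q)} λ(t) {law_{(P̂\•t)∪t•}(q')} holds. -/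
/-!
Common semantic framework for "The Ghosts of Empires":
Petri programs, Hoare triples, invariant domains, Owicki-Gries annotations,
territories, empires, saturated empires, focus.
-/

namespace GhostsOfEmpires

/-!
Fix a component `φ_i` focused at a region `r'` of `q'` that touches `(P̂ \ •t) ∪ t•`.
If `r'` meets `t•`, the inductive-edge condition of the focus puts `i` in the focus of a
region of `q` meeting `•t ⊆ P̂`. Otherwise `r'` is a bystander of `t` in `q` (or `q' = q`),
because saturation never touches the bystanders and every other region it produces contains
a fresh singleton `{p'}`, `p' ∈ t•`; the bystander condition then transfers the focus back
to `r'` in `q`. Either way `φ_i` is a conjunct of `law_P̂(q)`, and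
the `i`-th component of `law(q')` is `post_i(φ_i, t)`, which satisfies the Hoare triple.
-/

namespace PetriNet

variable {Place Trans Stmt State : Type*} {N : PetriNet Place Trans Stmt State}

theorem SaturateG.mem_or_exists_subset_s18 {Φ : Type*} {postA : Φ → Trans → Φ} {φ : Φ}
    {rb τ τ' : Set (Set Place)} (h : N.SaturateG postA φ rb τ τ') :
    ∀ r' ∈ τ', r' ∈ rb ∨ ∃ r ∈ τ, r ∉ rb ∧ r ⊆ r' := by
  induction h with
  | base =>
    intro r' hr'
    by_cases hrb : r' ∈ rb
    · exact Or.inl hrb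
    · exact Or.inr ⟨r', hr', hrb, subset_rfl⟩
  | step _ _ _ hrb _ ih =>
    intro r' hr'
    obtain hr'rb | ⟨r₁, hr₁, hr₁rb, hr₁r'⟩ := ih r' hr'
    · exact Or.inl hr'rb
    · obtain hby | ⟨r, hr, hrpre, rfl⟩ := hr₁
      · exact Or.inr ⟨r₁, hby.1, hr₁rb, hr₁r'⟩
      -- `r` meets `•t`, so it cannot be one of the bystanders in `rb`
      · exact Or.inr ⟨r, hr, fun hrrb => hrpre.ne_empty (hrb hrrb).2,
          Set.subset_union_left.trans hr₁r'⟩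

section Saturated

variable {Φ : Type*} {postA : Φ → Trans → Φ} {interp : Φ → State → Prop} {φtop : Φ}
  {q0 : Set (Set Place) × Φ}
  {δ0 : Set (Set Place) × Φ → Trans → Option (Set (Set Place) × Φ)}
  {q q' : Set (Set Place) × Φ} {t : Trans}

theorem IsSaturatedG.terrEnabled_and_exists_of_δ_eq_some
    (hsat : N.IsSaturatedG postA interp φtop q0 δ0) (hδ : δ0 q t = some q') :
    N.terrEnabled t q.1 ∧ ∃ s, interp (postA q.2 t) s := by
  by_contra h
  have hnone : δ0 (q.1, q.2) t = none := hsat.undefCond q.1 q.2 t <| by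
    rw [not_and_or, not_exists] at h
    exact h
  simp [hnone] at hδ

theorem IsSaturatedG.self_or_saturate_of_δ_eq_some
    (hsat : N.IsSaturatedG postA interp φtop q0 δ0) (hδ : δ0 q t = some q') :
    (q' = q ∧ postA q.2 t = q.2) ∨
      (q'.2 = postA q.2 t ∧
        N.SaturateG postA (postA q.2 t) (N.bystanders t q.1) (N.replaceT t q.1) q'.1) := by
  obtain ⟨hen, hpost⟩ := hsat.terrEnabled_and_exists_of_δ_eq_some hδ
  by_cases hself : N.terrFires q.1 t q.1 ∧ postA q.2 t = q.2
  · have := hsat.selfCond q.1 q.2 t hen hpost hself.1 hself.2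
    simp only [Prod.mk.eta, hδ, Option.some.injEq] at this
    exact Or.inl ⟨this, hself.2⟩
  · obtain ⟨τ', hτ', hstep⟩ := hsat.stepCond q.1 q.2 t hen hpost hself
    simp only [Prod.mk.eta, hδ, Option.some.injEq] at hstep
    subst hstep
    exact Or.inr ⟨rfl, hτ'⟩

theorem IsSaturatedG.snd_eq_of_δ_eq_some (hsat : N.IsSaturatedG postA interp φtop q0 δ0)
    (hδ : δ0 q t = some q') : q'.2 = postA q.2 t := by
  obtain ⟨rfl, hfix⟩ | ⟨hlaw, -⟩ := hsat.self_or_saturate_of_δ_eq_some hδ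
  · exact hfix.symm
  · exact hlaw

theorem IsSaturatedG.eq_or_mem_bystanders (hsat : N.IsSaturatedG postA interp φtop q0 δ0)
    (hδ : δ0 q t = some q') {r' : Set Place} (hr' : r' ∈ q'.1)
    (hdisj : ¬ (r' ∩ N.post t).Nonempty) :
    q' = q ∨ r' ∈ N.bystanders t q.1 := by
  obtain ⟨rfl, -⟩ | ⟨-, hτ'⟩ := hsat.self_or_saturate_of_δ_eq_some hδ
  · exact Or.inl rfl
  refine Or.inr ((hτ'.mem_or_exists_subset_s18 r' hr').resolve_right ?_)
  rintro ⟨r, hr | ⟨p', hp', rfl⟩, hrb, hrr'⟩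
  · exact hrb hr
  · exact hdisj ⟨p', hrr' rfl, hp'⟩

theorem IsSaturatedG.reach_mem_of_post_mem {A : Set Φ}
    (hsat : N.IsSaturatedG postA interp φtop q0 δ0) (htop : φtop ∈ A)
    (hpost : ∀ φ ∈ A, ∀ t, postA φ t ∈ A) (hq : EmpReach q0 δ0 q) : q.2 ∈ A := by
  induction hq with
  | init =>
    obtain ⟨τ, -, rfl⟩ := hsat.initCond
    exact htop
  | step _ hδ ih =>
    rw [hsat.snd_eq_of_δ_eq_some hδ]
    exact hpost _ ih _

end Saturated

section Product

variable {n : ℕ} {Ds : Fin n → N.InvDomain}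

theorem prodPost_mem {φv : Fin n → State → Prop} (hφv : ∀ i, φv i ∈ (Ds i).A) (t : Trans)
    (i : Fin n) : N.prodPost Ds φv t i ∈ (Ds i).A := by
  unfold prodPost
  split_ifs
  · exact (Ds i).post_mem _ (hφv i) t
  · exact (Ds i).bot_mem

theorem prodPost_eq_of_satisfiable {φv : Fin n → State → Prop} {t : Trans}
    (h : ∃ s, ∀ i, N.prodPost Ds φv t i s) :
    N.prodPost Ds φv t = fun i => (Ds i).postF (φv i) t := by
  unfold prodPost at h ⊢
  split_ifs at h ⊢ with hc
  · rfl
  · obtain ⟨s, hs⟩ := h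
    obtain ⟨i, -⟩ := not_forall.mp hc
    exact (hs i).elim

variable {q0 : Set (Set Place) × (Fin n → State → Prop)}
  {δ0 : Set (Set Place) × (Fin n → State → Prop) → Trans →
    Option (Set (Set Place) × (Fin n → State → Prop))}
  {q q' : Set (Set Place) × (Fin n → State → Prop)} {t : Trans}

theorem hoare_component_of_δ_eq_some
    (hsat : N.IsSaturatedG (N.prodPost Ds) (fun φv s => ∀ i, φv i s) (fun _ _ => True) q0 δ0)
    (hq : EmpReach q0 δ0 q) (hδ : δ0 q t = some q') (i : Fin n) :
    N.Hoare (q.2 i) (N.label t) (q'.2 i) := by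
  have hmem : ∀ i, q.2 i ∈ (Ds i).A :=
    hsat.reach_mem_of_post_mem (A := {φv : Fin n → State → Prop | ∀ i, φv i ∈ (Ds i).A})
      (fun i => (Ds i).top_mem) (fun _ hφv t => prodPost_mem hφv t) hq
  rw [hsat.snd_eq_of_δ_eq_some hδ,
    prodPost_eq_of_satisfiable (hsat.terrEnabled_and_exists_of_δ_eq_some hδ).2]
  exact (Ds i).post_hoare _ (hmem i) t

theorem IsFocus.exists_focused_region_of_δ_eq_some
    {ℓ : Set (Set Place) × (Fin n → State → Prop) → Set Place → Set (Fin n)}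
    (hfoc : N.IsFocus Ds q0 δ0 ℓ)
    (hsat : N.IsSaturatedG (N.prodPost Ds) (fun φv s => ∀ i, φv i s) (fun _ _ => True) q0 δ0)
    (hq : EmpReach q0 δ0 q) (hδ : δ0 q t = some q') {X : Set Place} (hpre : N.pre t ⊆ X)
    {p : Place} (hp : p ∈ (X \ N.pre t) ∪ N.post t) {r' : Set Place} (hr' : r' ∈ q'.1)
    (hpr' : p ∈ r') {i : Fin n} (hi : i ∈ ℓ q' r') :
    ∃ p₀ ∈ X, ∃ r ∈ q.1, i ∈ ℓ q r ∧ p₀ ∈ r := by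
  by_cases hmeet : (r' ∩ N.post t).Nonempty
  · obtain ⟨r, hr, ⟨p₀, hp₀r, hp₀pre⟩, hir⟩ :=
      hfoc.inductiveEdge q q' t hq hδ r' hr' hmeet i hi
    exact ⟨p₀, hpre hp₀pre, r, hr, hir, hp₀r⟩
  · have hpX : p ∈ X := hp.elim (·.1) fun hpost => (hmeet ⟨p, hpr', hpost⟩).elim
    obtain rfl | hby := hsat.eq_or_mem_bystanders hδ hr' hmeet
    · exact ⟨p, hpX, r', hr', hi, hpr'⟩
    · exact ⟨p, hpX, r', hby.1, hfoc.bystandersCond q q' t hq hδ r' hby i hi, hpr'⟩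

end Product

end PetriNet

end GhostsOfEmpires
open GhostsOfEmpires in
theorem statement18_general {Place Trans Stmt State : Type*}
    (N : PetriNet Place Trans Stmt State)
    {n : ℕ} (Ds : Fin n → N.InvDomain)
    (q0 : Set (Set Place) × (Fin n → State → Prop))
    (δ0 : Set (Set Place) × (Fin n → State → Prop) → Trans →
      Option (Set (Set Place) × (Fin n → State → Prop)))
    (hsat : N.IsSaturatedG (N.prodPost Ds) (fun φv s => ∀ i, φv i s)
      (fun _ _ => True) q0 δ0)
    (ℓ : Set (Set Place) × (Fin n → State → Prop) → Set Place → Set (Fin n))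
    (hfoc : N.IsFocus Ds q0 δ0 ℓ)
    (Phat : Set Place)
    (t : Trans) (hpre : N.pre t ⊆ Phat)
    (q q' : Set (Set Place) × (Fin n → State → Prop))
    (hq : EmpReach q0 δ0 q) (hδ : δ0 q t = some q') :
    N.Hoare (lawX ℓ q Phat) (N.label t)
      (lawX ℓ q' ((Phat \ N.pre t) ∪ N.post t)) := by
  rintro s s' hlaw hsem p hp i ⟨r', hr', hi, hpr'⟩
  obtain ⟨p₀, hp₀, r, hr, hir, hp₀r⟩ :=
    hfoc.exists_focused_region_of_δ_eq_some hsat hq hδ hpre hp hr' hpr' hi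
  exact PetriNet.hoare_component_of_δ_eq_some hsat hq hδ i s s'
    (hlaw p₀ hp₀ i ⟨r, hr, hir, hp₀r⟩) hsem

open GhostsOfEmpires in
/-- Let `(A,post)` be a safe product invariant domain, `E` a
corresponding saturated empire, and `ℓ` a focus on `E`. Let `P̂` be a subset of a
reachable marking, `t` a transition with `•t ⊆ P̂`, and `q, q'` states of `E` with
`δ(q,t) = q'`. Then the Hoare triple `{law_P̂(q)} λ(t) {law_{(P̂\•t)∪t•}(q')}` holds. -/
theorem statement18 {Place Trans Stmt State : Type*}
    [Fintype Place] [Fintype Trans] [Fintype Stmt]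
    (N : PetriNet Place Trans Stmt State)
    {n : ℕ} (Ds : Fin n → N.InvDomain) (hsafe : N.prodSafe Ds)
    (q0 : Set (Set Place) × (Fin n → State → Prop))
    (δ0 : Set (Set Place) × (Fin n → State → Prop) → Trans →
      Option (Set (Set Place) × (Fin n → State → Prop)))
    (hsat : N.IsSaturatedG (N.prodPost Ds) (fun φv s => ∀ i, φv i s)
      (fun _ _ => True) q0 δ0)
    (ℓ : Set (Set Place) × (Fin n → State → Prop) → Set Place → Set (Fin n))
    (hfoc : N.IsFocus Ds q0 δ0 ℓ)
    (Phat : Set Place) (hsub : ∃ m, N.Reachable m ∧ Phat ⊆ m)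
    (t : Trans) (hpre : N.pre t ⊆ Phat)
    (q q' : Set (Set Place) × (Fin n → State → Prop))
    (hq : EmpReach q0 δ0 q) (hδ : δ0 q t = some q') :
    N.Hoare (lawX ℓ q Phat) (N.label t)
      (lawX ℓ q' ((Phat \ N.pre t) ∪ N.post t)) :=
  statement18_general N Ds q0 δ0 hsat ℓ hfoc Phat t hpre q q' hq hδ
end
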